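/- arXiv:2309.02693 — 4 statements merged into one kernel-verified Lean document; each statement's English description precedes it below -/
import Mathlib

section
/- Let H be a subgroup of a finite group G and N a normal subgroup with N ≤ H. If H covers or avoids every pd-chief factor of G, then H/N covers or avoids every pd-chief factor of G/N. -/
/-- `A` covers the factor `K/L` if `K ≤ LA`. -/
def Covers {G : Type*} [Group G] (A K L : Subgroup G) : Prop := K ≤ L ⊔ A

/-- `A` avoids the factor `K/L` if `A ∩ K ≤ L`. -/
def Avoids {G : Type*} [Group G] (A K L : Subgroup G) : Prop := A ⊓ K ≤ L

/-- `K/L` is a chief factor of `G`: both are normal, `L < K`, and there is no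
normal subgroup of `G` strictly between `L` and `K`. -/
def IsChiefFactor {G : Type*} [Group G] (K L : Subgroup G) : Prop :=
  K.Normal ∧ L.Normal ∧ L < K ∧
    ∀ M : Subgroup G, M.Normal → L < M → M ≤ K → M = K

/-- `A` is a `p`-CAP-subgroup of `G`: it covers or avoids every `pd`-chief factor. -/
def IsPCAP {G : Type*} [Group G] (p : ℕ) (A : Subgroup G) : Prop :=
  ∀ K L : Subgroup G, IsChiefFactor K L → p ∣ Nat.card (K ⧸ L.subgroupOf K) →
    Covers A K L ∨ Avoids A K L

/-- `H` is an `ICPC`-subgroup of `G` (for the prime `p`). -/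
def IsICPC {G : Type*} [Group G] (p : ℕ) (H : Subgroup G) : Prop :=
  ∃ A : Subgroup G, A ≤ H ∧ IsPCAP p A ∧ H ⊓ ⁅H, (⊤ : Subgroup G)⁆ ≤ A

/-!
A chief factor `K/L` of a quotient `Q` of `G` pulls back to the chief factor
`f⁻¹(K)/f⁻¹(L)` of `G` of the same order. If `H` covers the pull-back, then `f(H)` covers
`K/L` by taking images; if `H` avoids it, then so does `f(H)`, since an element `f(h)` of
`K` has `h ∈ f⁻¹(K)`.
-/

section

variable {G Q : Type*} [Group G] [Group Q] {f : G →* Q}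

theorem IsChiefFactor.comap {K L : Subgroup Q} (hf : Function.Surjective f)
    (hKL : IsChiefFactor K L) : IsChiefFactor (K.comap f) (L.comap f) := by
  obtain ⟨hK, hL, hLK, hmax⟩ := hKL
  refine ⟨hK.comap f, hL.comap f, (Subgroup.comap_lt_comap_of_surjective hf).2 hLK, ?_⟩
  intro M hM hLM hMK
  have hM_eq : (M.map f).comap f = M :=
    Subgroup.comap_map_eq_self ((L.ker_le_comap f).trans hLM.le)
  have hL_lt : L < M.map f := by
    rwa [← Subgroup.comap_lt_comap_of_surjective hf, hM_eq]
  rw [← hM_eq, hmax (M.map f) (hM.map f hf) hL_lt (Subgroup.map_le_iff_le_comap.2 hMK)]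

theorem card_quotient_subgroupOf_comap (hf : Function.Surjective f) (K L : Subgroup Q) :
    Nat.card (K.comap f ⧸ (L.comap f).subgroupOf (K.comap f)) =
      Nat.card (K ⧸ L.subgroupOf K) := by
  change (L.comap f).relIndex (K.comap f) = L.relIndex K
  rw [Subgroup.relIndex_comap, Subgroup.map_comap_eq_self_of_surjective hf]

theorem Covers.map {A K L : Subgroup G} (h : Covers A K L) (f : G →* Q) :
    Covers (A.map f) (K.map f) (L.map f) := by
  unfold Covers at h ⊢
  rw [← Subgroup.map_sup]
  exact Subgroup.map_mono h

theorem Avoids.map_of_comap {A : Subgroup G} {K L : Subgroup Q}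
    (h : Avoids A (K.comap f) (L.comap f)) : Avoids (A.map f) K L := by
  rintro _ ⟨⟨g, hgA, rfl⟩, hgK⟩
  exact h ⟨hgA, hgK⟩

end

theorem stmt_3_general {G : Type*} [Group G] (p : ℕ) (H N : Subgroup G)
    [N.Normal]
    (h : ∀ K L : Subgroup G, IsChiefFactor K L →
      p ∣ Nat.card (K ⧸ L.subgroupOf K) → Covers H K L ∨ Avoids H K L) :
    IsPCAP p (H.map (QuotientGroup.mk' N)) := by
  intro K L hKL hp
  have hπ := QuotientGroup.mk'_surjective N
  rw [← card_quotient_subgroupOf_comap hπ] at hp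
  rcases h _ _ (hKL.comap hπ) hp with hcov | havoid
  · left
    simpa only [Subgroup.map_comap_eq_self_of_surjective hπ] using hcov.map (QuotientGroup.mk' N)
  · exact Or.inr havoid.map_of_comap

theorem stmt_3 {G : Type*} [Group G] [Finite G] (p : ℕ) (H N : Subgroup G)
    [N.Normal] (hNH : N ≤ H)
    (h : ∀ K L : Subgroup G, IsChiefFactor K L →
      p ∣ Nat.card (K ⧸ L.subgroupOf K) → Covers H K L ∨ Avoids H K L) :
    IsPCAP p (H.map (QuotientGroup.mk' N)) :=
  stmt_3_general p H N h
end

section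
/- Let G be a finite group, H ≤ G, and N ⊴ G with gcd(|H|,|N|) = 1. Then HN ∩ [H,G] = (H ∩ [H,G])(N ∩ H[H,G]). -/
/-!
Write `K = ⁅H, G⁆`; it is normal in `G`. In `G ⧸ K` the images of `H` and `N` have coprime
orders, so they meet trivially; as `HK ⧸ K` is the image of `H`, this gives `N ∩ HK ≤ K`.
Now if `hn ∈ K` with `h ∈ H`, `n ∈ N`, then `n = h⁻¹ (hn) ∈ N ∩ HK ≤ K`, hence also `h ∈ K`.
-/

open Pointwise

namespace Subgroup

variable {G : Type*} [Group G]

open scoped commutatorElement in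
instance commutator_top_right_normal (H : Subgroup G) : (⁅H, ⊤⁆ : Subgroup G).Normal where
  conj_mem k hk g := by
    have hle : ⁅H, ⊤⁆ ≤ (⁅H, ⊤⁆ : Subgroup G).comap (MulAut.conj g).toMonoidHom :=
      commutator_le.mpr fun h hh y _ => by
        have hconj : g * ⁅h, y⁆ * g⁻¹ = ⁅h, g⁆⁻¹ * ⁅h, g * y⁆ := by
          simp only [commutatorElement_def]
          group
        rw [mem_comap, MulEquiv.coe_toMonoidHom, MulAut.conj_apply, hconj]
        exact mul_mem (inv_mem (commutator_mem_commutator hh (mem_top g)))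
          (commutator_mem_commutator hh (mem_top (g * y)))
    exact hle hk

theorem inf_sup_le_of_coprime {H N K : Subgroup G} [K.Normal]
    (hcop : (Nat.card H).Coprime (Nat.card N)) : N ⊓ (H ⊔ K) ≤ K := by
  rintro x ⟨hxN, hxHK⟩
  obtain ⟨h, hh, k, hk, rfl⟩ := mem_sup_of_normal_right.mp hxHK
  let π := QuotientGroup.mk' K
  have hπ : π (h * k) = π h := by
    simp [π, (QuotientGroup.eq_one_iff k).mpr hk]
  have hdisj : Disjoint (H.map π) (N.map π) :=
    disjoint_of_coprime_natCard ((hcop.coprime_dvd_left (card_map_dvd H π)).coprime_dvd_right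
      (card_map_dvd N π))
  have hxH : π (h * k) ∈ H.map π := hπ ▸ mem_map_of_mem π hh
  exact (QuotientGroup.eq_one_iff _).mp (disjoint_def.mp hdisj hxH (mem_map_of_mem π hxN))

theorem coe_sup_inter_eq_inf_mul_inf_of_coprime {H N K : Subgroup G} [N.Normal] [K.Normal]
    (hcop : (Nat.card H).Coprime (Nat.card N)) :
    ((H ⊔ N : Subgroup G) : Set G) ∩ K =
      ((H ⊓ K : Subgroup G) : Set G) * (N ⊓ (H ⊔ K) : Subgroup G) := by
  ext x
  constructor
  · rintro ⟨hxHN, hxK⟩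
    obtain ⟨h, hh, n, hn, rfl⟩ := mem_sup_of_normal_right.mp hxHN
    have hnHK : n ∈ H ⊔ K := by
      simpa using mul_mem (mem_sup_left (inv_mem hh)) (mem_sup_right (T := K) hxK)
    have hnK : n ∈ K := inf_sup_le_of_coprime hcop ⟨hn, hnHK⟩
    exact ⟨h, ⟨hh, (mul_mem_cancel_right hnK).mp hxK⟩, n, ⟨hn, hnHK⟩, rfl⟩
  · rintro ⟨a, ⟨haH, haK⟩, b, hb, rfl⟩
    exact ⟨mul_mem (mem_sup_left haH) (mem_sup_right hb.1),
      mul_mem haK (inf_sup_le_of_coprime hcop hb)⟩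

end Subgroup

theorem stmt_5_general {G : Type*} [Group G] (H N : Subgroup G)
    [N.Normal] (hcop : Nat.Coprime (Nat.card H) (Nat.card N)) :
    ((H ⊔ N : Subgroup G) : Set G) ∩ ((⁅H, (⊤ : Subgroup G)⁆ : Subgroup G) : Set G) =
      ((H ⊓ ⁅H, (⊤ : Subgroup G)⁆ : Subgroup G) : Set G) *
        ((N ⊓ (H ⊔ ⁅H, (⊤ : Subgroup G)⁆) : Subgroup G) : Set G) :=
  Subgroup.coe_sup_inter_eq_inf_mul_inf_of_coprime hcop

theorem stmt_5 {G : Type*} [Group G] [Finite G] (H N : Subgroup G)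
    [N.Normal] (hcop : Nat.Coprime (Nat.card H) (Nat.card N)) :
    ((H ⊔ N : Subgroup G) : Set G) ∩ ((⁅H, (⊤ : Subgroup G)⁆ : Subgroup G) : Set G) =
      ((H ⊓ ⁅H, (⊤ : Subgroup G)⁆ : Subgroup G) : Set G) *
        ((N ⊓ (H ⊔ ⁅H, (⊤ : Subgroup G)⁆) : Subgroup G) : Set G) :=
  stmt_5_general H N hcop
end

section
/- Let M be a maximal subgroup of a finite group G and Q a normal p-subgroup of G such that G = MQ. Then Q ∩ M is normal in G. -/
/-!
Both `Q` and `M` normalize `Q ⊓ M`, so `M ≤ N(Q ⊓ M)`. As a finite `p`-group, `Q` is nilpotent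
and hence satisfies the normalizer condition; since `Q ⊓ M` is proper in `Q` (because `MQ = G`),
some element of `Q \ M` normalizes `Q ⊓ M`. Maximality of `M` then forces `N(Q ⊓ M) = G`.
-/

open Subgroup

theorem NormalizerCondition.lt_inf_normalizer {G : Type*} [Group G] {Q H : Subgroup G}
    (hnc : NormalizerCondition Q) (hHQ : H < Q) : H < normalizer H ⊓ Q := by
  have hproper : H.subgroupOf Q < ⊤ :=
    lt_top_iff_ne_top.mpr fun h => hHQ.not_ge (subgroupOf_eq_top.mp h)
  have hlt := hnc _ hproper
  rw [← subgroupOf_normalizer_eq hHQ.le,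
    ← map_lt_map_iff_of_injective Q.subtype_injective, subgroupOf_map_subtype,
    subgroupOf_map_subtype, inf_of_le_left hHQ.le] at hlt
  exact hlt

theorem normal_inf_of_isCoatom {G : Type*} [Group G] {M Q : Subgroup G}
    (hM : IsCoatom M) (hQ : Q.Normal) (hnc : NormalizerCondition Q) (hQM : ¬Q ≤ M) :
    (Q ⊓ M).Normal := by
  have hM_le : M ≤ normalizer (Q ⊓ M) :=
    (le_inf le_normalizer_of_normal le_normalizer).trans inf_normalizer_le_normalizer_inf
  have hQ_not_le : ¬normalizer (Q ⊓ M : Subgroup G) ≤ M := fun h =>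
    ((hnc.lt_inf_normalizer (inf_lt_left.mpr hQM)).trans_le
      (inf_comm (normalizer _) Q ▸ inf_le_inf_left Q h)).false
  exact normalizer_eq_top_iff.mp (hM.2 _ (hM_le.lt_of_not_ge hQ_not_le))

theorem stmt_8 {G : Type*} [Group G] [Finite G] (p : ℕ) [Fact p.Prime]
    (M Q : Subgroup G) (hM : IsCoatom M) (hQ : Q.Normal) (hQp : IsPGroup p Q)
    (hG : M ⊔ Q = ⊤) :
    (Q ⊓ M).Normal := by
  have : Group.IsNilpotent Q := hQp.isNilpotent
  refine normal_inf_of_isCoatom hM hQ Group.normalizerCondition_of_isNilpotent fun hQM => ?_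
  exact hM.1 (by rwa [sup_of_le_left hQM] at hG)
end

section
/- Let G be a finite group with a normal Sylow p-subgroup K_p such that K_p/Φ(K_p) is a chief factor of G, and let x ∈ K_p \ Φ(K_p). If [⟨x⟩,G] ≤ Φ(K_p), then K_p = ⟨x⟩, i.e., K_p is cyclic generated by x. -/
/-!
Since `[⟨x⟩, G] ≤ Φ`, the normal closure `⟨x⟩^G = ⟨x⟩[⟨x⟩, G]` lies in `⟨x⟩Φ`. As `x ∉ Φ`,
minimality of the chief factor `K_p/Φ` forces `⟨x⟩^G Φ = K_p`, hence `K_p = ⟨x⟩Φ`, and the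
Frattini subgroup of `K_p` can be dropped from this generating set.
-/

open Subgroup
open scoped commutatorElement

theorem Subgroup.normalClosure_singleton_le_zpowers_sup_commutator {G : Type*} [Group G]
    (x : G) : normalClosure {x} ≤ zpowers x ⊔ ⁅zpowers x, (⊤ : Subgroup G)⁆ := by
  rw [normalClosure, closure_le]
  intro c hc
  obtain ⟨a, rfl, hconj⟩ := Group.mem_conjugatesOfSet_iff.mp hc
  obtain ⟨g, rfl⟩ := isConj_iff.mp hconj
  have hcomm : ⁅g, a⁆ ∈ ⁅zpowers a, (⊤ : Subgroup G)⁆ := by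
    rw [commutator_comm]
    exact commutator_mem_commutator (mem_top g) (mem_zpowers a)
  have hconj_eq : g * a * g⁻¹ = ⁅g, a⁆ * a := by
    rw [commutatorElement_def]; group
  rw [SetLike.mem_coe, hconj_eq]
  exact mul_mem (mem_sup_right hcomm) (mem_sup_left (mem_zpowers a))

theorem IsChiefFactor.eq_zpowers_sup_of_commutator_le {G : Type*} [Group G] {K N : Subgroup G}
    (hKN : IsChiefFactor K N) {x : G} (hxK : x ∈ K) (hxN : x ∉ N)
    (hcomm : ⁅zpowers x, (⊤ : Subgroup G)⁆ ≤ N) : K = zpowers x ⊔ N := by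
  obtain ⟨hK, hN, hNK, hmin⟩ := hKN
  have hclosure_le : normalClosure {x} ⊔ N ≤ K :=
    sup_le (normalClosure_le_normal (Set.singleton_subset_iff.mpr hxK)) hNK.le
  have hN_lt : N < normalClosure {x} ⊔ N :=
    lt_of_le_of_ne le_sup_right fun hEq =>
      hxN (hEq ▸ mem_sup_left (subset_normalClosure rfl))
  have hclosure_eq : normalClosure {x} ⊔ N = K := hmin _ (sup_normal _ _) hN_lt hclosure_le
  refine le_antisymm ?_ (sup_le (zpowers_le.mpr hxK) hNK.le)
  calc K = normalClosure {x} ⊔ N := hclosure_eq.symm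
    _ ≤ zpowers x ⊔ ⁅zpowers x, (⊤ : Subgroup G)⁆ ⊔ N :=
      sup_le_sup_right (normalClosure_singleton_le_zpowers_sup_commutator x) N
    _ ≤ zpowers x ⊔ N := sup_le (sup_le le_sup_left (hcomm.trans le_sup_right)) le_sup_right

theorem Subgroup.eq_of_le_sup_map_frattini {G : Type*} [Group G] {H A : Subgroup G}
    [IsCoatomic (Subgroup H)] (hAH : A ≤ H) (hH : H ≤ A ⊔ (frattini H).map H.subtype) :
    A = H := by
  have hsup : A.subgroupOf H ⊔ frattini H = ⊤ := by
    refine map_injective H.subtype_injective (le_antisymm (map_mono le_top) ?_)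
    rwa [map_sup, map_subgroupOf_eq_of_le hAH, ← MonoidHom.range_eq_map, range_subtype]
  exact le_antisymm hAH (subgroupOf_eq_top.mp (frattini_nongenerating hsup))

theorem stmt_11_general {G : Type*} [Group G] [Finite G] (p : ℕ)
    (Kp : Sylow p G)
    (hchief : IsChiefFactor (Kp : Subgroup G)
      ((frattini ↥(Kp : Subgroup G)).map (Kp : Subgroup G).subtype))
    (x : G) (hx : x ∈ (Kp : Subgroup G))
    (hx' : x ∉ (frattini ↥(Kp : Subgroup G)).map (Kp : Subgroup G).subtype)
    (h : ⁅Subgroup.zpowers x, (⊤ : Subgroup G)⁆ ≤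
      (frattini ↥(Kp : Subgroup G)).map (Kp : Subgroup G).subtype) :
    (Kp : Subgroup G) = Subgroup.zpowers x :=
  (eq_of_le_sup_map_frattini (zpowers_le.mpr hx)
    (hchief.eq_zpowers_sup_of_commutator_le hx hx' h).le).symm

theorem stmt_11 {G : Type*} [Group G] [Finite G] (p : ℕ) [Fact p.Prime]
    (Kp : Sylow p G) (hn : (Kp : Subgroup G).Normal)
    (hchief : IsChiefFactor (Kp : Subgroup G)
      ((frattini ↥(Kp : Subgroup G)).map (Kp : Subgroup G).subtype))
    (x : G) (hx : x ∈ (Kp : Subgroup G))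
    (hx' : x ∉ (frattini ↥(Kp : Subgroup G)).map (Kp : Subgroup G).subtype)
    (h : ⁅Subgroup.zpowers x, (⊤ : Subgroup G)⁆ ≤
      (frattini ↥(Kp : Subgroup G)).map (Kp : Subgroup G).subtype) :
    (Kp : Subgroup G) = Subgroup.zpowers x :=
  stmt_11_general p Kp hchief x hx hx' h
end
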